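/- arXiv:0801.0718 — 2 statements merged into one kernel-verified Lean document; each statement's English description precedes it below -/
import Mathlib

section
/- Let X be a progressively measurable càdlàg real-valued process on a filtered probability space satisfying the usual hypotheses. The following are equivalent: (a) X is sticky; (b) for every a.s. bounded stopping time τ, every A ∈ F_τ with P(A) > 0, every ε > 0, and every real T with τ ≤ T a.s., P(A ∩ {sup_{t ∈ [τ,T]} |X_τ − X_t| < ε}) > 0; (c) for every a.s. bounded stopping time τ₀ and every δ > 0, the stopping time τ₁ = inf{t ≥ τ₀ : |X_t − X_{τ₀}| > δ} is unbounded on every A ∈ F_{τ₀} with P(A) > 0, i.e., for every real M, P(A ∩ {τ₁ > M}) > 0. -/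
open MeasureTheory Filter Set Topology
open scoped NNReal ENNReal

/-! Càdlàg paths are bounded on compact intervals, so the suprema in (a) and (b) are honest
suprema (not the junk value `0` of an unbounded `⨆`) and are monotone in the right endpoint.

(b) ⇒ (a): apply (b) to `τ ∧ T` and the event `{τ < T} ∈ F_{τ ∧ T}`.
(a) ⇒ (b): the time equal to `τ` on `A ∩ {τ ≤ T}` and to `T + 1` elsewhere is a stopping time
which is `< T + 1` exactly on that event, and the event has the probability of `A` because
`τ ≤ T` a.s.; stickiness at horizon `T + 1` then gives (b) at horizon `T`.
(b) ⇔ (c): an oscillation below `δ` on `[τ, T]` forces the exit time to be at least `T`, and an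
exit time beyond `T` bounds the oscillation on `[τ, T]` by `δ`. -/

/-- A real-valued process indexed by `ℝ≥0` is càdlàg: every path is right-continuous
and has a left limit at every positive time. -/
def IsCadlag {Ω : Type*} (X : ℝ≥0 → Ω → ℝ) : Prop :=
  ∀ ω, (∀ t : ℝ≥0, ContinuousWithinAt (fun s => X s ω) (Set.Ici t) t) ∧
    ∀ t : ℝ≥0, 0 < t → ∃ l : ℝ,
      Filter.Tendsto (fun s => X s ω) (nhdsWithin t (Set.Iio t)) (nhds l)

/-- A process `X` is sticky with respect to the filtration `𝓕` and the measure `P` if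
for all `ε > 0`, all `T > 0` and all stopping times `τ` with `P(τ < T) > 0`, we have
`P(sup_{t ∈ [τ, T]} |X_τ - X_t| < ε, τ < T) > 0`. -/
def Sticky {Ω : Type*} {m : MeasurableSpace Ω} (𝓕 : MeasureTheory.Filtration ℝ≥0 m)
    (P : MeasureTheory.Measure Ω) (X : ℝ≥0 → Ω → ℝ) : Prop :=
  ∀ ε : ℝ, 0 < ε → ∀ T : ℝ≥0, 0 < T → ∀ τ : Ω → ℝ≥0,
    MeasureTheory.IsStoppingTime 𝓕 (fun ω => (τ ω : WithTop ℝ≥0)) → 0 < P {ω | τ ω < T} →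
    0 < P ({ω | (⨆ t ∈ Set.Icc (τ ω) T, |X (τ ω) ω - X t ω|) < ε} ∩ {ω | τ ω < T})

/-- The first time after the stopping time `τ₀` at which the process `X` moves away from
`X_{τ₀}` by more than `δ`, with the convention `inf ∅ = +∞`. -/
noncomputable def hitTime {Ω : Type*} (X : ℝ≥0 → Ω → ℝ) (τ₀ : Ω → ℝ≥0) (δ : ℝ) (ω : Ω) : ℝ≥0∞ :=
  sInf ((fun u : ℝ≥0 => (u : ℝ≥0∞)) ''
    {u : ℝ≥0 | τ₀ ω ≤ u ∧ δ < |X u ω - X (τ₀ ω) ω|})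

theorem IsCompact.isBounded_image_of_locally_isBounded {α E : Type*} [TopologicalSpace α]
    [Bornology E] {f : α → E} {K : Set α} (hK : IsCompact K)
    (hf : ∀ x ∈ K, ∃ s ∈ 𝓝 x, Bornology.IsBounded (f '' s)) :
    Bornology.IsBounded (f '' K) := by
  refine hK.induction_on (p := fun s => Bornology.IsBounded (f '' s)) (by simp)
    (fun s t hst ht => ht.subset (image_mono hst))
    (fun s t hs ht => by simpa only [image_union] using hs.union ht) fun x hx => ?_
  obtain ⟨s, hs, hfs⟩ := hf x hx
  exact ⟨s, mem_nhdsWithin_of_mem_nhds hs, hfs⟩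

theorem Filter.Tendsto.exists_mem_isBounded_image {α E : Type*} [PseudoMetricSpace E]
    {f : α → E} {l : Filter α} {a : E} (hf : Tendsto f l (𝓝 a)) :
    ∃ s ∈ l, Bornology.IsBounded (f '' s) :=
  ⟨f ⁻¹' Metric.ball a 1, hf (Metric.ball_mem_nhds a one_pos),
    Metric.isBounded_ball.subset (image_preimage_subset f _)⟩

theorem IsCompact.isBounded_image_of_continuousWithinAt_Ici_of_tendsto_nhdsLT {α E : Type*}
    [TopologicalSpace α] [LinearOrder α] [OrderTopology α] [PseudoMetricSpace E]
    {f : α → E} {K : Set α} (hK : IsCompact K)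
    (hright : ∀ x ∈ K, ContinuousWithinAt f (Ici x) x)
    (hleft : ∀ x ∈ K, ∃ l, Tendsto f (𝓝[<] x) (𝓝 l)) :
    Bornology.IsBounded (f '' K) := by
  refine hK.isBounded_image_of_locally_isBounded fun x hx => ?_
  obtain ⟨l, hl⟩ := hleft x hx
  obtain ⟨s, hs, hfs⟩ := hl.exists_mem_isBounded_image
  obtain ⟨t, ht, hft⟩ := (hright x hx).tendsto.exists_mem_isBounded_image
  refine ⟨s ∪ t, ?_, by simpa only [image_union] using hfs.union hft⟩
  rw [← nhdsLT_sup_nhdsGE]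
  exact union_mem_sup hs ht

theorem Real.biSup_le {α : Type*} {S : Set α} {g : α → ℝ} {B : ℝ} (hB : 0 ≤ B)
    (h : ∀ t ∈ S, g t ≤ B) : (⨆ t ∈ S, g t) ≤ B :=
  Real.iSup_le (fun t => Real.iSup_le (h t) hB) hB

namespace IsCadlag

variable {Ω : Type*} {X : ℝ≥0 → Ω → ℝ}

theorem isBounded_image_Icc (hX : IsCadlag X) (ω : Ω) (a b : ℝ≥0) :
    Bornology.IsBounded ((X · ω) '' Icc a b) := by
  refine isCompact_Icc.isBounded_image_of_continuousWithinAt_Ici_of_tendsto_nhdsLT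
    (fun x _ => (hX ω).1 x) fun x _ => ?_
  rcases eq_zero_or_pos x with rfl | hx
  · exact ⟨0, by simp⟩
  · exact (hX ω).2 x hx

theorem abs_sub_le_biSup (hX : IsCadlag X) (ω : Ω) {c T t : ℝ≥0} (ht : t ∈ Icc c T) :
    |X c ω - X t ω| ≤ ⨆ u ∈ Icc c T, |X c ω - X u ω| := by
  obtain ⟨r, hr⟩ := (Metric.isBounded_iff_subset_closedBall (X c ω)).1
    (hX.isBounded_image_Icc ω c T)
  refine le_ciSup₂ (f := fun u (_ : u ∈ Icc c T) => |X c ω - X u ω|) ⟨r, ?_⟩ t ht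
  simp only [mem_upperBounds, mem_iUnion, mem_range]
  rintro _ ⟨u, hu, rfl⟩
  simpa [Real.dist_eq, abs_sub_comm] using hr (mem_image_of_mem _ hu)

theorem biSup_abs_sub_mono (hX : IsCadlag X) (ω : Ω) {c T T' : ℝ≥0} (hT : T ≤ T') :
    (⨆ t ∈ Icc c T, |X c ω - X t ω|) ≤ ⨆ t ∈ Icc c T', |X c ω - X t ω| :=
  Real.biSup_le (Real.iSup_nonneg fun _ => Real.iSup_nonneg fun _ => abs_nonneg _)
    fun _ ht => hX.abs_sub_le_biSup ω ⟨ht.1, ht.2.trans hT⟩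

end IsCadlag

section hitTime

variable {Ω : Type*} {X : ℝ≥0 → Ω → ℝ} {τ : Ω → ℝ≥0} {δ : ℝ} {ω : Ω}

theorem abs_sub_le_of_lt_hitTime {t : ℝ≥0} (ht : τ ω ≤ t) (hlt : (t : ℝ≥0∞) < hitTime X τ δ ω) :
    |X t ω - X (τ ω) ω| ≤ δ := by
  by_contra! h
  exact hlt.not_ge (sInf_le (mem_image_of_mem _ ⟨ht, h⟩))

theorem le_hitTime_of_forall_abs_sub_le {T : ℝ≥0}
    (h : ∀ t ∈ Icc (τ ω) T, |X t ω - X (τ ω) ω| ≤ δ) : (T : ℝ≥0∞) ≤ hitTime X τ δ ω := by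
  refine le_sInf ?_
  rintro _ ⟨u, ⟨hu, hδu⟩, rfl⟩
  by_contra! huT
  exact (h u ⟨hu, ENNReal.coe_le_coe.1 huT.le⟩).not_gt hδu

end hitTime

namespace MeasureTheory.IsStoppingTime

variable {Ω ι : Type*} {m : MeasurableSpace Ω} [Preorder ι] {𝓕 : Filtration ι m}

theorem piecewise_const {τ : Ω → WithTop ι}
    (hτ : IsStoppingTime 𝓕 τ) {s : Set Ω} [DecidablePred (· ∈ s)]
    (hs : MeasurableSet[hτ.measurableSpace] s) {c : WithTop ι} (hc : ∀ ω ∈ s, τ ω ≤ c) :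
    IsStoppingTime 𝓕 (s.piecewise τ fun _ => c) := by
  intro i
  by_cases hci : c ≤ i
  · convert @MeasurableSet.univ _ (𝓕 i)
    refine eq_univ_of_forall fun ω => ?_
    by_cases hω : ω ∈ s
    · simpa [hω] using (hc ω hω).trans hci
    · simpa [hω] using hci
  · convert hs.2 i using 1
    ext ω
    by_cases hω : ω ∈ s <;> simp [hω, hci]

end MeasureTheory.IsStoppingTime

def StickyAtStoppingTimes {Ω : Type*} {m : MeasurableSpace Ω} (𝓕 : Filtration ℝ≥0 m)
    (P : Measure Ω) (X : ℝ≥0 → Ω → ℝ) : Prop :=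
  ∀ τ : Ω → ℝ≥0, ∀ hτ : IsStoppingTime 𝓕 (fun ω => (τ ω : WithTop ℝ≥0)),
    (∃ C : ℝ≥0, ∀ᵐ ω ∂P, τ ω ≤ C) →
    ∀ A : Set Ω, MeasurableSet[hτ.measurableSpace] A → 0 < P A →
    ∀ ε : ℝ, 0 < ε → ∀ T : ℝ≥0, (∀ᵐ ω ∂P, τ ω ≤ T) →
    0 < P (A ∩ {ω | (⨆ t ∈ Icc (τ ω) T, |X (τ ω) ω - X t ω|) < ε})

def HitTimeUnbounded {Ω : Type*} {m : MeasurableSpace Ω} (𝓕 : Filtration ℝ≥0 m)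
    (P : Measure Ω) (X : ℝ≥0 → Ω → ℝ) : Prop :=
  ∀ τ₀ : Ω → ℝ≥0, ∀ hτ₀ : IsStoppingTime 𝓕 (fun ω => (τ₀ ω : WithTop ℝ≥0)),
    (∃ C : ℝ≥0, ∀ᵐ ω ∂P, τ₀ ω ≤ C) → ∀ δ : ℝ, 0 < δ →
    ∀ A : Set Ω, MeasurableSet[hτ₀.measurableSpace] A → 0 < P A →
    ∀ M : ℝ≥0, 0 < P (A ∩ {ω | (M : ℝ≥0∞) < hitTime X τ₀ δ ω})

section Equivalences

variable {Ω : Type*} {m : MeasurableSpace Ω} {𝓕 : Filtration ℝ≥0 m} {P : Measure Ω}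
  {X : ℝ≥0 → Ω → ℝ}

theorem Sticky.stickyAtStoppingTimes (hX : IsCadlag X) (h : Sticky 𝓕 P X) :
    StickyAtStoppingTimes 𝓕 P X := by
  classical
  intro τ hτ _ A hA hPA ε hε T hτT
  set A' := A ∩ {ω | τ ω ≤ T}
  have hA' : MeasurableSet[hτ.measurableSpace] A' :=
    hA.inter (by simpa only [WithTop.coe_le_coe] using hτ.measurableSet_le' T)
  have hPA' : P A' = P A := measure_inter_conull (ae_iff.1 hτT)
  set σ : Ω → ℝ≥0 := A'.piecewise τ fun _ => T + 1
  have hσ : IsStoppingTime 𝓕 fun ω => (σ ω : WithTop ℝ≥0) := by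
    convert hτ.piecewise_const hA' (c := ((T + 1 : ℝ≥0) : WithTop ℝ≥0))
      fun ω hω => by exact_mod_cast hω.2.trans le_self_add using 1
    ext1 ω
    exact apply_piecewise _ _ _ fun _ (t : ℝ≥0) => (t : WithTop ℝ≥0)
  have hσA' : {ω | σ ω < T + 1} = A' := by
    ext ω
    by_cases hω : ω ∈ A'
    · simpa [σ, hω] using hω.2.trans_lt (lt_add_one T)
    · simp [σ, hω]
  have key := h ε hε (T + 1) (by positivity) σ hσ (by rwa [hσA', hPA'])
  rw [hσA'] at key
  refine key.trans_le (measure_mono ?_)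
  rintro ω ⟨hω, hωA'⟩
  have hσω : σ ω = τ ω := A'.piecewise_eq_of_mem _ _ hωA'
  rw [mem_ofPred_eq, hσω] at hω
  exact ⟨hωA'.1, (hX.biSup_abs_sub_mono ω le_self_add).trans_lt hω⟩

theorem StickyAtStoppingTimes.sticky (h : StickyAtStoppingTimes 𝓕 P X) : Sticky 𝓕 P X := by
  intro ε hε T _ τ hτ hPτ
  have hτT : IsStoppingTime 𝓕 fun ω => ((min (τ ω) T : ℝ≥0) : WithTop ℝ≥0) := hτ.min_const T
  have hA : MeasurableSet[hτT.measurableSpace] {ω | τ ω < T} := by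
    simpa only [WithTop.coe_lt_coe] using
      (hτ.measurableSet_min_const_iff _).2 ⟨hτ.measurableSet_lt' T, hτ.measurableSet_lt T⟩
  have hτT_le : ∀ᵐ ω ∂P, min (τ ω) T ≤ T := ae_of_all _ fun ω => min_le_right _ _
  refine (h _ hτT ⟨T, hτT_le⟩ _ hA hPτ ε hε T hτT_le).trans_le (measure_mono ?_)
  rintro ω ⟨hωT, hω⟩
  rw [mem_ofPred_eq, min_eq_left hωT.le] at hω
  exact ⟨hω, hωT⟩

theorem StickyAtStoppingTimes.hitTimeUnbounded (hX : IsCadlag X)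
    (h : StickyAtStoppingTimes 𝓕 P X) : HitTimeUnbounded 𝓕 P X := by
  intro τ hτ ⟨C, hC⟩ δ hδ A hA hPA M
  set T := max C (M + 1)
  have hMT : (M : ℝ≥0∞) < T := by exact_mod_cast (lt_add_one M).trans_le (le_max_right C _)
  have hτT : ∀ᵐ ω ∂P, τ ω ≤ T := hC.mono fun ω hω => hω.trans (le_max_left _ _)
  refine (h τ hτ ⟨C, hC⟩ A hA hPA δ hδ T hτT).trans_le (measure_mono ?_)
  rintro ω ⟨hωA, hω⟩
  refine ⟨hωA, hMT.trans_le (le_hitTime_of_forall_abs_sub_le fun t ht => ?_)⟩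
  rw [abs_sub_comm]
  exact ((hX.abs_sub_le_biSup ω ht).trans_lt hω).le

theorem HitTimeUnbounded.stickyAtStoppingTimes (h : HitTimeUnbounded 𝓕 P X) :
    StickyAtStoppingTimes 𝓕 P X := by
  intro τ hτ hbdd A hA hPA ε hε T _
  refine (h τ hτ hbdd (ε / 2) (half_pos hε) A hA hPA T).trans_le (measure_mono ?_)
  rintro ω ⟨hωA, hω⟩
  refine ⟨hωA, (Real.biSup_le (half_pos hε).le fun t ht => ?_).trans_lt (half_lt_self hε)⟩
  rw [abs_sub_comm]
  exact abs_sub_le_of_lt_hitTime ht.1 (lt_of_le_of_lt (by exact_mod_cast ht.2) hω)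

end Equivalences

theorem sticky_tfae_general {Ω : Type*} {m : MeasurableSpace Ω}
    (𝓕 : MeasureTheory.Filtration ℝ≥0 m) (P : MeasureTheory.Measure Ω)
    (X : ℝ≥0 → Ω → ℝ)
    (hcadlag : IsCadlag X) :
    (Sticky 𝓕 P X ↔
      (∀ τ : Ω → ℝ≥0, ∀ hτ : MeasureTheory.IsStoppingTime 𝓕 (fun ω => (τ ω : WithTop ℝ≥0)),
        (∃ C : ℝ≥0, ∀ᵐ ω ∂P, τ ω ≤ C) →
        ∀ A : Set Ω, MeasurableSet[hτ.measurableSpace] A → 0 < P A →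
        ∀ ε : ℝ, 0 < ε → ∀ T : ℝ≥0, (∀ᵐ ω ∂P, τ ω ≤ T) →
        0 < P (A ∩ {ω | (⨆ t ∈ Set.Icc (τ ω) T, |X (τ ω) ω - X t ω|) < ε})))
    ∧ ((∀ τ : Ω → ℝ≥0, ∀ hτ : MeasureTheory.IsStoppingTime 𝓕 (fun ω => (τ ω : WithTop ℝ≥0)),
        (∃ C : ℝ≥0, ∀ᵐ ω ∂P, τ ω ≤ C) →
        ∀ A : Set Ω, MeasurableSet[hτ.measurableSpace] A → 0 < P A →
        ∀ ε : ℝ, 0 < ε → ∀ T : ℝ≥0, (∀ᵐ ω ∂P, τ ω ≤ T) →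
        0 < P (A ∩ {ω | (⨆ t ∈ Set.Icc (τ ω) T, |X (τ ω) ω - X t ω|) < ε})) ↔
      (∀ τ₀ : Ω → ℝ≥0, ∀ hτ₀ : MeasureTheory.IsStoppingTime 𝓕 (fun ω => (τ₀ ω : WithTop ℝ≥0)),
        (∃ C : ℝ≥0, ∀ᵐ ω ∂P, τ₀ ω ≤ C) → ∀ δ : ℝ, 0 < δ →
        ∀ A : Set Ω, MeasurableSet[hτ₀.measurableSpace] A → 0 < P A →
        ∀ M : ℝ≥0, 0 < P (A ∩ {ω | (M : ℝ≥0∞) < hitTime X τ₀ δ ω}))) :=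
  ⟨⟨Sticky.stickyAtStoppingTimes hcadlag, StickyAtStoppingTimes.sticky⟩,
    ⟨StickyAtStoppingTimes.hitTimeUnbounded hcadlag, HitTimeUnbounded.stickyAtStoppingTimes⟩⟩

/-- For a progressively measurable càdlàg process `X` on a filtered probability space
satisfying the usual hypotheses, the following are equivalent:
(a) `X` is sticky;
(b) for every a.s. bounded stopping time `τ`, every `A ∈ F_τ` with `P(A) > 0`, every
    `ε > 0` and every `T` with `τ ≤ T` a.s., `P(A ∩ {sup_{t∈[τ,T]} |X_τ - X_t| < ε}) > 0`;
(c) for every a.s. bounded stopping time `τ₀` and every `δ > 0`, the stopping time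
    `τ₁ = inf{t ≥ τ₀ : |X_t - X_{τ₀}| > δ}` is unbounded on every `A ∈ F_{τ₀}` with
    `P(A) > 0`. -/
theorem sticky_tfae {Ω : Type*} {m : MeasurableSpace Ω}
    (𝓕 : MeasureTheory.Filtration ℝ≥0 m) (P : MeasureTheory.Measure Ω)
    [MeasureTheory.IsProbabilityMeasure P] [P.IsComplete]
    (hRC : ∀ t : ℝ≥0, (𝓕 t : MeasurableSpace Ω)
      = ⨅ s : ℝ≥0, ⨅ _ : t < s, (𝓕 s : MeasurableSpace Ω))
    (hNull : ∀ N : Set Ω, MeasurableSet N → P N = 0 → MeasurableSet[𝓕 0] N)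
    (X : ℝ≥0 → Ω → ℝ) (hprog : MeasureTheory.ProgMeasurable 𝓕 X)
    (hcadlag : IsCadlag X) :
    (Sticky 𝓕 P X ↔
      (∀ τ : Ω → ℝ≥0, ∀ hτ : MeasureTheory.IsStoppingTime 𝓕 (fun ω => (τ ω : WithTop ℝ≥0)),
        (∃ C : ℝ≥0, ∀ᵐ ω ∂P, τ ω ≤ C) →
        ∀ A : Set Ω, MeasurableSet[hτ.measurableSpace] A → 0 < P A →
        ∀ ε : ℝ, 0 < ε → ∀ T : ℝ≥0, (∀ᵐ ω ∂P, τ ω ≤ T) →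
        0 < P (A ∩ {ω | (⨆ t ∈ Set.Icc (τ ω) T, |X (τ ω) ω - X t ω|) < ε})))
    ∧ ((∀ τ : Ω → ℝ≥0, ∀ hτ : MeasureTheory.IsStoppingTime 𝓕 (fun ω => (τ ω : WithTop ℝ≥0)),
        (∃ C : ℝ≥0, ∀ᵐ ω ∂P, τ ω ≤ C) →
        ∀ A : Set Ω, MeasurableSet[hτ.measurableSpace] A → 0 < P A →
        ∀ ε : ℝ, 0 < ε → ∀ T : ℝ≥0, (∀ᵐ ω ∂P, τ ω ≤ T) →
        0 < P (A ∩ {ω | (⨆ t ∈ Set.Icc (τ ω) T, |X (τ ω) ω - X t ω|) < ε})) ↔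
      (∀ τ₀ : Ω → ℝ≥0, ∀ hτ₀ : MeasureTheory.IsStoppingTime 𝓕 (fun ω => (τ₀ ω : WithTop ℝ≥0)),
        (∃ C : ℝ≥0, ∀ᵐ ω ∂P, τ₀ ω ≤ C) → ∀ δ : ℝ, 0 < δ →
        ∀ A : Set Ω, MeasurableSet[hτ₀.measurableSpace] A → 0 < P A →
        ∀ M : ℝ≥0, 0 < P (A ∩ {ω | (M : ℝ≥0∞) < hitTime X τ₀ δ ω}))) :=
  sticky_tfae_general 𝓕 P X hcadlag
end

section
/- Let X be a progressively measurable càdlàg process taking values in an open interval (a, b), where −∞ ≤ a < b ≤ +∞, on a filtered probability space satisfying the usual hypotheses, and let f : (a, b) → ℝ be a continuous function. If X is sticky, then the process f(X) = (f(X_t))_{t≥0} is also sticky. -/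
/-!
Since `ℝ` is second countable, the law of `X_τ` on `{τ < T}` charges every neighbourhood of some
`x₀ ∈ (a, b)`. Replacing `τ` by `T` off the `𝓕_τ`-event `{τ < T, |X_τ - x₀| < ρ/2}` gives a
stopping time to which stickiness of `X` applies with `δ = ρ/2`; on the resulting event the path
stays in the ball of radius `ρ` around `x₀`, where `f` oscillates by less than `ε/2`. Càdlàg paths
are bounded on compacts, which is what lets the real supremum in `Sticky` (junk value `0` for an
unbounded family) control every `|X_τ - X_t|`.
-/

open MeasureTheory Filter Set Topology
open scoped NNReal ENNReal

lemma exists_mem_nhds_isBounded_image_of_tendsto_nhdsLT_nhdsGE {α β : Type*}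
    [TopologicalSpace α] [LinearOrder α] [PseudoMetricSpace β] {g : α → β} {x : α} {l r : β}
    (hl : Tendsto g (𝓝[<] x) (𝓝 l)) (hr : Tendsto g (𝓝[≥] x) (𝓝 r)) :
    ∃ s ∈ 𝓝 x, Bornology.IsBounded (g '' s) := by
  obtain ⟨s₁, hs₁, hb₁⟩ := Metric.exists_isBounded_image_of_tendsto hl
  obtain ⟨s₂, hs₂, hb₂⟩ := Metric.exists_isBounded_image_of_tendsto hr
  refine ⟨s₁ ∪ s₂, ?_, by rw [image_union]; exact hb₁.union hb₂⟩
  rw [← nhdsLT_sup_nhdsGE x]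
  exact ⟨mem_of_superset hs₁ subset_union_left, mem_of_superset hs₂ subset_union_right⟩

namespace IsCadlag

variable {Ω : Type*} {X : ℝ≥0 → Ω → ℝ}

lemma isBounded_image (hX : IsCadlag X) (ω : Ω) {s : Set ℝ≥0} (hs : IsCompact s) :
    Bornology.IsBounded ((X · ω) '' s) := by
  refine Bornology.isBounded_image_of_isLocallyBounded_of_isCompact hs fun t => ?_
  obtain ⟨l, hl⟩ : ∃ l, Tendsto (X · ω) (𝓝[<] t) (𝓝 l) := by
    rcases (zero_le : 0 ≤ t).eq_or_lt with rfl | ht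
    · exact ⟨0, by simp [tendsto_bot]⟩
    · exact (hX ω).2 t ht
  exact exists_mem_nhds_isBounded_image_of_tendsto_nhdsLT_nhdsGE hl ((hX ω).1 t)

lemma abs_sub_lt_of_iSup_lt (hX : IsCadlag X) {ω : Ω} {s T : ℝ≥0} {δ : ℝ}
    (h : (⨆ t ∈ Icc s T, |X s ω - X t ω|) < δ) {t : ℝ≥0} (ht : t ∈ Icc s T) :
    |X s ω - X t ω| < δ := by
  obtain ⟨C, hC⟩ := Metric.isBounded_iff.mp (hX.isBounded_image ω isCompact_Icc)
  have hbdd : BddAbove (⋃ t, range fun (_ : t ∈ Icc s T) => |X s ω - X t ω|) := by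
    refine ⟨C, ?_⟩
    rintro _ ⟨_, ⟨u, rfl⟩, ⟨hu, rfl⟩⟩
    exact hC (mem_image_of_mem _ (left_mem_Icc.mpr (hu.1.trans hu.2))) (mem_image_of_mem _ hu)
  exact (le_ciSup₂ (f := fun t (_ : t ∈ Icc s T) => |X s ω - X t ω|) hbdd t ht).trans_lt h

end IsCadlag

lemma MeasureTheory.IsStoppingTime.piecewise_const_of_le {Ω ι : Type*}
    {m : MeasurableSpace Ω} [Preorder ι] {𝓕 : Filtration ι m} {τ : Ω → ι}
    (hτ : IsStoppingTime 𝓕 (fun ω => (τ ω : WithTop ι)))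
    {A : Set Ω} [DecidablePred (· ∈ A)] (hA : MeasurableSet[hτ.measurableSpace] A) {T : ι}
    (hAT : ∀ ω ∈ A, τ ω ≤ T) :
    IsStoppingTime 𝓕 (fun ω => (A.piecewise τ (fun _ => T) ω : WithTop ι)) := by
  intro i
  have hAi := hA.2 i
  by_cases hTi : T ≤ i
  · have hA_eq : A ∩ {ω | (τ ω : WithTop ι) ≤ i} = A :=
      inter_eq_left.mpr fun ω hω => WithTop.coe_le_coe.mpr ((hAT ω hω).trans hTi)
    convert hAi.union (hA_eq ▸ hAi).compl using 1
    ext ω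
    by_cases hω : ω ∈ A <;> simp [hω, hTi]
  · convert hAi using 1
    ext ω
    by_cases hω : ω ∈ A <;> simp [hω, hTi]

lemma Sticky.measure_inter_pos {Ω : Type*} {m : MeasurableSpace Ω} {𝓕 : Filtration ℝ≥0 m}
    {P : Measure Ω} {X : ℝ≥0 → Ω → ℝ} (hX : Sticky 𝓕 P X) {δ : ℝ} (hδ : 0 < δ) {T : ℝ≥0}
    (hT : 0 < T) {τ : Ω → ℝ≥0} (hτ : IsStoppingTime 𝓕 (fun ω => (τ ω : WithTop ℝ≥0)))
    {A : Set Ω} (hA : MeasurableSet[hτ.measurableSpace] A) (hAT : ∀ ω ∈ A, τ ω < T)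
    (hAP : 0 < P A) :
    0 < P ({ω | (⨆ t ∈ Icc (τ ω) T, |X (τ ω) ω - X t ω|) < δ} ∩ A) := by
  classical
  set σ := A.piecewise τ (fun _ => T)
  have hσ := hτ.piecewise_const_of_le hA fun ω hω => (hAT ω hω).le
  have hσA : {ω | σ ω < T} = A := by
    ext ω
    by_cases hω : ω ∈ A <;> simp [σ, hω, hAT ω]
  convert hX δ hδ T hT σ hσ (hσA ▸ hAP) using 2
  rw [hσA]
  ext ω
  by_cases hω : ω ∈ A <;> simp [σ, hω]

lemma exists_mem_forall_measure_preimage_ball_inter_pos {Ω β : Type*} [MeasurableSpace Ω]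
    [PseudoMetricSpace β] [SecondCountableTopology β] [MeasurableSpace β]
    [OpensMeasurableSpace β] {μ : Measure Ω} {V : Ω → β} (hV : Measurable V) {B : Set Ω}
    (hB : μ B ≠ 0) {S : Set β} (hBS : MapsTo V B S) :
    ∃ x ∈ S, ∀ r > 0, 0 < μ (V ⁻¹' Metric.ball x r ∩ B) := by
  have hS : (μ.restrict B).map V S ≠ 0 := by
    refine ne_bot_of_le_ne_bot ?_ (Measure.le_map_apply hV.aemeasurable S)
    rwa [Measure.restrict_apply_superset hBS.subset_preimage]
  obtain ⟨x, hx, hpos⟩ := exists_mem_forall_mem_nhdsWithin_pos_measure hS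
  refine ⟨x, hx, fun r hr => ?_⟩
  have := hpos _ (mem_nhdsWithin_of_mem_nhds (Metric.ball_mem_nhds x hr))
  rwa [Measure.map_apply hV measurableSet_ball, Measure.restrict_apply (hV measurableSet_ball)]
    at this

lemma iSup_abs_sub_comp_le {ι : Type*} {f : ℝ → ℝ} {g : ι → ℝ} {s : Set ι} {i₀ : ι}
    {U : Set ℝ} {x₀ η : ℝ} (hη : 0 ≤ η) (hf : ∀ x ∈ U, |f x - f x₀| ≤ η) (hg : MapsTo g s U)
    (hi₀ : g i₀ ∈ U) :
    (⨆ i ∈ s, |f (g i₀) - f (g i)|) ≤ 2 * η := by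
  refine Real.iSup_le (fun i => Real.iSup_le (fun hi => ?_) (by positivity)) (by positivity)
  calc |f (g i₀) - f (g i)| ≤ |f (g i₀) - f x₀| + |f (g i) - f x₀| :=
        abs_sub_comm (f (g i)) (f x₀) ▸ abs_sub_le _ _ _
    _ ≤ η + η := add_le_add (hf _ hi₀) (hf _ (hg hi))
    _ = 2 * η := by ring

theorem sticky_comp_continuousOn_general {Ω : Type*} {m : MeasurableSpace Ω}
    (𝓕 : MeasureTheory.Filtration ℝ≥0 m) (P : MeasureTheory.Measure Ω)
    (a b : EReal)
    (X : ℝ≥0 → Ω → ℝ) (hprog : MeasureTheory.ProgMeasurable 𝓕 X) (hcadlag : IsCadlag X)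
    (hmem : ∀ t : ℝ≥0, ∀ ω : Ω, a < (X t ω : EReal) ∧ (X t ω : EReal) < b)
    (f : ℝ → ℝ) (hf : ContinuousOn f {x : ℝ | a < (x : EReal) ∧ (x : EReal) < b})
    (hsticky : Sticky 𝓕 P X) :
    Sticky 𝓕 P (fun t ω => f (X t ω)) := by
  intro ε hε T hT τ hτ hpos
  set S := {x : ℝ | a < (x : EReal) ∧ (x : EReal) < b}
  have hS : IsOpen S := isOpen_Ioo.preimage continuous_coe_real_ereal
  set V := stoppedValue X fun ω => (τ ω : WithTop ℝ≥0)
  have hVτ := measurable_stoppedValue hprog hτ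
  obtain ⟨x₀, hx₀, hx₀P⟩ := exists_mem_forall_measure_preimage_ball_inter_pos
    (hVτ.mono hτ.measurableSpace_le le_rfl) hpos.ne' (S := S) fun ω _ => hmem (τ ω) ω
  obtain ⟨ρ, hρ, hfρ⟩ := Metric.continuousAt_iff.mp (hf.continuousAt (hS.mem_nhds hx₀))
    (ε / 4) (by positivity)
  have hA : MeasurableSet[hτ.measurableSpace] (V ⁻¹' Metric.ball x₀ (ρ / 2) ∩ {ω | τ ω < T}) :=
    (hVτ measurableSet_ball).inter (by simpa only [WithTop.coe_lt_coe] using hτ.measurableSet_lt' T)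
  refine (hsticky.measure_inter_pos (half_pos hρ) hT hτ hA (fun ω hω => hω.2)
    (hx₀P _ (half_pos hρ))).trans_le (measure_mono ?_)
  rintro ω ⟨hsup, hVω, hτT⟩
  have hpath : MapsTo (X · ω) (Icc (τ ω) T) (Metric.ball x₀ ρ) := fun t ht => calc
    dist (X t ω) x₀ ≤ dist (X (τ ω) ω) (X t ω) + dist (X (τ ω) ω) x₀ := dist_triangle_left ..
    _ < ρ / 2 + ρ / 2 := add_lt_add (hcadlag.abs_sub_lt_of_iSup_lt hsup ht) hVω
    _ = ρ := add_halves ρ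
  refine ⟨?_, hτT⟩
  show (⨆ t ∈ Icc (τ ω) T, |f (X (τ ω) ω) - f (X t ω)|) < ε
  calc _ ≤ 2 * (ε / 4) :=
        iSup_abs_sub_comp_le (by positivity) (fun x hx => (Real.dist_eq _ _ ▸ hfρ hx).le) hpath
          (hpath (left_mem_Icc.mpr hτT.le))
    _ < ε := by linarith

/-- Let `X` be a progressively measurable càdlàg process taking values in an open
interval `(a, b)` with `-∞ ≤ a < b ≤ +∞`, and let `f` be continuous on `(a, b)`.
If `X` is sticky, then `f(X)` is sticky. -/
theorem sticky_comp_continuousOn {Ω : Type*} {m : MeasurableSpace Ω}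
    (𝓕 : MeasureTheory.Filtration ℝ≥0 m) (P : MeasureTheory.Measure Ω)
    [MeasureTheory.IsProbabilityMeasure P] [P.IsComplete]
    (hRC : ∀ t : ℝ≥0, (𝓕 t : MeasurableSpace Ω)
      = ⨅ s : ℝ≥0, ⨅ _ : t < s, (𝓕 s : MeasurableSpace Ω))
    (hNull : ∀ N : Set Ω, MeasurableSet N → P N = 0 → MeasurableSet[𝓕 0] N)
    (a b : EReal) (hab : a < b)
    (X : ℝ≥0 → Ω → ℝ) (hprog : MeasureTheory.ProgMeasurable 𝓕 X) (hcadlag : IsCadlag X)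
    (hmem : ∀ t : ℝ≥0, ∀ ω : Ω, a < (X t ω : EReal) ∧ (X t ω : EReal) < b)
    (f : ℝ → ℝ) (hf : ContinuousOn f {x : ℝ | a < (x : EReal) ∧ (x : EReal) < b})
    (hsticky : Sticky 𝓕 P X) :
    Sticky 𝓕 P (fun t ω => f (X t ω)) :=
  sticky_comp_continuousOn_general 𝓕 P a b X hprog hcadlag hmem f hf hsticky
end
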